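/- For all u, v ∈ V and all ring embeddings σ, σ' : E → ℂ, one has B_ℂ(p_σ(u⊗1), p_{σ'}(v⊗1)) = σ(Φ(u,v)) if σ' = σ∘ι, and B_ℂ(p_σ(u⊗1), p_{σ'}(v⊗1)) = 0 if σ' ≠ σ∘ι. In particular B_ℂ vanishes identically on V_σ × V_{σ'} whenever σ' ≠ σ∘ι (equivalently, whenever σ' is not the conjugate embedding conj∘σ). -/

import Mathlib

open scoped TensorProduct

/-- The action of `e : E` on `ℂ ⊗[ℚ] V` (the `E`-module structure
`e • (c ⊗ v) = c ⊗ (e • v)` on `V ⊗_ℚ ℂ`). -/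
noncomputable def actC (E : Type*) {V : Type*} [Field E] [CharZero E]
    [AddCommGroup V] [Module E V] [Module ℚ V] [IsScalarTower ℚ E V] (e : E) :
    ℂ ⊗[ℚ] V →ₗ[ℂ] ℂ ⊗[ℚ] V :=
  LinearMap.baseChange ℂ ((LinearMap.lsmul E V e).restrictScalars ℚ)

/-- `V_σ = {ξ ∈ V ⊗_ℚ ℂ : e • ξ = σ(e) · ξ for all e ∈ E}`. -/
noncomputable def VsigC (E : Type*) {V : Type*} [Field E] [CharZero E]
    [AddCommGroup V] [Module E V] [Module ℚ V] [IsScalarTower ℚ E V] (σ : E →+* ℂ) :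
    Submodule ℂ (ℂ ⊗[ℚ] V) :=
  ⨅ e : E, LinearMap.ker (actC E e - σ e • LinearMap.id)

/-! Since `Φ (ι e • u) v = ι e * Φ u v = Φ u (e • v)`, the action of `ι e` on `V ⊗ ℂ` is adjoint
to that of `e` for `B`. Comparing the eigenvalues `σ (ι e)` and `σ' e` on `V_σ × V_σ'` shows
that `B` pairs `V_σ` only with `V_{σ∘ι}`. Decomposing `u ⊗ 1` and `v ⊗ 1` into eigencomponents
therefore gives, for every `e`,
`Tr (e * Φ u v) = B ((e • u) ⊗ 1) (v ⊗ 1) = ∑ τ, τ e * B (p τ (u ⊗ 1)) (p (τ∘ι) (v ⊗ 1))`,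
while `Tr (e * Φ u v) = ∑ τ, τ e * τ (Φ u v)`; linear independence of the characters `τ`
identifies the coefficients. -/

theorem Submodule.sum_apply_eq_self_of_iSup_eq_top {ι R M : Type*} [Fintype ι] [Semiring R]
    [AddCommMonoid M] [Module R M] {W : ι → Submodule R M} (hW : iSup W = ⊤)
    (p : ι → M →ₗ[R] M) (hp_self : ∀ i, ∀ x ∈ W i, p i x = x)
    (hp_zero : ∀ i j, i ≠ j → ∀ x ∈ W j, p i x = 0) (x : M) :
    ∑ i, p i x = x := by
  refine Submodule.iSup_induction W (motive := fun x => ∑ i, p i x = x)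
    (hW ▸ Submodule.mem_top) (fun j y hy => ?_) (by simp) fun y z hy hz => ?_
  · rw [Finset.sum_eq_single j (fun i _ hij => hp_zero i j hij y hy)
      (absurd (Finset.mem_univ _)), hp_self j y hy]
  · simp only [map_add, Finset.sum_add_distrib, hy, hz]

theorem LinearMap.sum_apply_sum_eq_of_orthogonal {ι R M N P : Type*} [Fintype ι]
    [CommSemiring R] [AddCommMonoid M] [Module R M] [AddCommMonoid N] [Module R N]
    [AddCommMonoid P] [Module R P] (B : M →ₗ[R] N →ₗ[R] P) (g : ι → ι) (x : ι → M)
    (y : ι → N) (h : ∀ i j, j ≠ g i → B (x i) (y j) = 0) :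
    B (∑ i, x i) (∑ j, y j) = ∑ i, B (x i) (y (g i)) := by
  rw [map_sum B, LinearMap.sum_apply]
  refine Finset.sum_congr rfl fun i _ => ?_
  rw [map_sum]
  exact Finset.sum_eq_single (g i) (fun j _ hj => h i j hj) (absurd (Finset.mem_univ _))

theorem LinearMap.apply_baseChange_eq_apply_baseChange {R A M N P : Type*} [CommSemiring R]
    [CommSemiring A] [Algebra R A] [AddCommMonoid M] [Module R M] [AddCommMonoid N] [Module R N]
    [AddCommMonoid P] [Module A P] (B : A ⊗[R] M →ₗ[A] A ⊗[R] N →ₗ[A] P)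
    (f : M →ₗ[R] M) (g : N →ₗ[R] N)
    (h : ∀ (a b : A) (m : M) (n : N), B (a ⊗ₜ f m) (b ⊗ₜ n) = B (a ⊗ₜ m) (b ⊗ₜ g n))
    (ξ : A ⊗[R] M) (ζ : A ⊗[R] N) :
    B (f.baseChange A ξ) ζ = B ξ (g.baseChange A ζ) := by
  induction ξ using TensorProduct.induction_on with
  | zero => simp
  | add ξ₁ ξ₂ h₁ h₂ => simp only [map_add, LinearMap.add_apply, h₁, h₂]
  | tmul a m =>
    induction ζ using TensorProduct.induction_on with
    | zero => simp
    | add ζ₁ ζ₂ h₁ h₂ => simp only [map_add, h₁, h₂]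
    | tmul b n => simpa only [LinearMap.baseChange_tmul] using h a b m n

theorem RingHom.coeff_eq_of_forall_sum_mul_apply_eq {K L : Type*} [Semiring K] [CommRing L]
    [IsDomain L] [Fintype (K →+* L)] {a b : (K →+* L) → L}
    (h : ∀ x, ∑ τ, a τ * τ x = ∑ τ, b τ * τ x) : a = b := by
  have hli : LinearIndependent L (fun τ : K →+* L => (τ : K → L)) :=
    (linearIndependent_monoidHom K L).comp (fun τ : K →+* L => (τ : K →* L))
      RingHom.coe_monoidHom_injective
  have hzero : ∑ τ, (a - b) τ • (τ : K → L) = 0 := by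
    funext x
    simp [sub_mul, Finset.sum_sub_distrib, h x]
  funext τ
  exact sub_eq_zero.mp (Fintype.linearIndependent_iff.mp hli _ hzero τ)

theorem NumberField.ratCast_trace_eq_sum_ringHom {K : Type*} [Field K] [NumberField K] (x : K) :
    ((Algebra.trace ℚ K x : ℚ) : ℂ) = ∑ τ : K →+* ℂ, τ x := by
  rw [← eq_ratCast (algebraMap ℚ ℂ), trace_eq_sum_embeddings ℂ]
  exact Fintype.sum_equiv (RingHom.equivRatAlgHom K ℂ).symm _ _ fun _ => rfl

section Eigenspaces

variable {E V : Type*} [Field E] [CharZero E] [AddCommGroup V] [Module E V] [Module ℚ V]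
  [IsScalarTower ℚ E V]

theorem mem_VsigC_iff {σ : E →+* ℂ} {ξ : ℂ ⊗[ℚ] V} :
    ξ ∈ VsigC E σ ↔ ∀ e, actC E e ξ = σ e • ξ := by
  simp [VsigC, Submodule.mem_iInf, sub_eq_zero]

theorem actC_tmul (e : E) (c : ℂ) (v : V) : actC E e (c ⊗ₜ[ℚ] v) = c ⊗ₜ (e • v) := rfl

theorem apply_eq_zero_of_mem_VsigC (ι : E →+* E) (B : ℂ ⊗[ℚ] V →ₗ[ℂ] ℂ ⊗[ℚ] V →ₗ[ℂ] ℂ)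
    (hadj : ∀ e ξ ζ, B (actC E (ι e) ξ) ζ = B ξ (actC E e ζ)) {σ σ' : E →+* ℂ}
    (hσ : σ' ≠ σ.comp ι) {ξ ζ : ℂ ⊗[ℚ] V} (hξ : ξ ∈ VsigC E σ) (hζ : ζ ∈ VsigC E σ') :
    B ξ ζ = 0 := by
  obtain ⟨e, he⟩ : ∃ e, σ (ι e) ≠ σ' e := by
    by_contra! h
    exact hσ (RingHom.ext fun e => (h e).symm)
  have hscalar : σ (ι e) * B ξ ζ = σ' e * B ξ ζ := by
    simpa [mem_VsigC_iff.mp hξ, mem_VsigC_iff.mp hζ] using hadj e ξ ζ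
  exact (mul_eq_mul_right_iff.mp hscalar).resolve_left he

theorem actC_adjoint (ι : E →+* E) (Φ : V → V → E) (B : ℂ ⊗[ℚ] V →ₗ[ℂ] ℂ ⊗[ℚ] V →ₗ[ℂ] ℂ)
    (hΦ_smul_left : ∀ (e : E) (x y : V), Φ (e • x) y = e * Φ x y)
    (hΦ_smul_right : ∀ (e : E) (x y : V), Φ x (e • y) = ι e * Φ x y)
    (hB : ∀ (c c' : ℂ) (u v : V),
      B (c ⊗ₜ[ℚ] u) (c' ⊗ₜ[ℚ] v) = c * c' * ((Algebra.trace ℚ E (Φ u v) : ℚ) : ℂ))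
    (e : E) (ξ ζ : ℂ ⊗[ℚ] V) : B (actC E (ι e) ξ) ζ = B ξ (actC E e ζ) :=
  B.apply_baseChange_eq_apply_baseChange _ _
    (fun c c' u v => by simp [hB, hΦ_smul_left, hΦ_smul_right]) ξ ζ

theorem apply_proj_tmul_proj_comp_tmul [NumberField E] (ι : E →+* E) (Φ : V → V → E)
    (B : ℂ ⊗[ℚ] V →ₗ[ℂ] ℂ ⊗[ℚ] V →ₗ[ℂ] ℂ)
    (hΦ_smul_left : ∀ (e : E) (x y : V), Φ (e • x) y = e * Φ x y)
    (hB : ∀ (c c' : ℂ) (u v : V),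
      B (c ⊗ₜ[ℚ] u) (c' ⊗ₜ[ℚ] v) = c * c' * ((Algebra.trace ℚ E (Φ u v) : ℚ) : ℂ))
    (hadj : ∀ e ξ ζ, B (actC E (ι e) ξ) ζ = B ξ (actC E e ζ))
    (p : (E →+* ℂ) → ℂ ⊗[ℚ] V →ₗ[ℂ] ℂ ⊗[ℚ] V) (hp_mem : ∀ σ ξ, p σ ξ ∈ VsigC E σ)
    (hp_sum : ∀ ξ, ∑ σ, p σ ξ = ξ) (u v : V) (σ : E →+* ℂ) :
    B (p σ ((1 : ℂ) ⊗ₜ[ℚ] u)) (p (σ.comp ι) ((1 : ℂ) ⊗ₜ[ℚ] v)) = σ (Φ u v) := by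
  suffices h : (fun τ : E →+* ℂ => B (p τ ((1 : ℂ) ⊗ₜ[ℚ] u)) (p (τ.comp ι) ((1 : ℂ) ⊗ₜ[ℚ] v)))
      = fun τ => τ (Φ u v) from congr_fun h σ
  refine RingHom.coeff_eq_of_forall_sum_mul_apply_eq fun e => ?_
  have hact : actC E e ((1 : ℂ) ⊗ₜ[ℚ] u) = ∑ τ, τ e • p τ ((1 : ℂ) ⊗ₜ[ℚ] u) := by
    conv_lhs => rw [← hp_sum ((1 : ℂ) ⊗ₜ[ℚ] u)]
    rw [map_sum]
    exact Finset.sum_congr rfl fun τ _ => mem_VsigC_iff.mp (hp_mem τ _) e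
  calc ∑ τ, B (p τ ((1 : ℂ) ⊗ₜ[ℚ] u)) (p (τ.comp ι) ((1 : ℂ) ⊗ₜ[ℚ] v)) * τ e
      = ∑ τ, B (τ e • p τ ((1 : ℂ) ⊗ₜ[ℚ] u)) (p (τ.comp ι) ((1 : ℂ) ⊗ₜ[ℚ] v)) := by
        simp only [map_smul, LinearMap.smul_apply, smul_eq_mul, mul_comm]
    _ = B (∑ τ, τ e • p τ ((1 : ℂ) ⊗ₜ[ℚ] u)) (∑ τ, p τ ((1 : ℂ) ⊗ₜ[ℚ] v)) :=
        (B.sum_apply_sum_eq_of_orthogonal (fun τ => τ.comp ι) _ _ fun τ τ' h =>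
          apply_eq_zero_of_mem_VsigC ι B hadj h
            (Submodule.smul_mem _ _ (hp_mem τ _)) (hp_mem τ' _)).symm
    _ = B (actC E e ((1 : ℂ) ⊗ₜ[ℚ] u)) ((1 : ℂ) ⊗ₜ[ℚ] v) := by rw [hact, hp_sum]
    _ = ∑ τ : E →+* ℂ, τ (Φ u v) * τ e := by
        rw [actC_tmul, hB, hΦ_smul_left, one_mul, one_mul,
          NumberField.ratCast_trace_eq_sum_ringHom]
        exact Finset.sum_congr rfl fun τ _ => by rw [map_mul, mul_comm]

end Eigenspaces

theorem stmt4_general (E V : Type*) [Field E] [NumberField E]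
    (ι : E →+* E)
    [AddCommGroup V] [Module E V] [Module ℚ V] [IsScalarTower ℚ E V]
    (Φ : V → V → E)
    (hΦsmul1 : ∀ (e : E) (x y : V), Φ (e • x) y = e * Φ x y)
    (hΦsmul2 : ∀ (e : E) (x y : V), Φ x (e • y) = ι e * Φ x y)
    (B : (ℂ ⊗[ℚ] V) →ₗ[ℂ] (ℂ ⊗[ℚ] V) →ₗ[ℂ] ℂ)
    (hB : ∀ (c c' : ℂ) (u v : V),
      B (c ⊗ₜ[ℚ] u) (c' ⊗ₜ[ℚ] v) = c * c' * ((Algebra.trace ℚ E (Φ u v) : ℚ) : ℂ))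
    [DecidableEq (E →+* ℂ)]
    (hInternal : DirectSum.IsInternal (fun σ : E →+* ℂ => VsigC E (V := V) σ))
    (p : (E →+* ℂ) → (ℂ ⊗[ℚ] V) →ₗ[ℂ] ℂ ⊗[ℚ] V)
    (hp1 : ∀ (σ : E →+* ℂ) (ξ : ℂ ⊗[ℚ] V), p σ ξ ∈ VsigC E (V := V) σ)
    (hp2 : ∀ (σ : E →+* ℂ) (ξ : ℂ ⊗[ℚ] V), ξ ∈ VsigC E (V := V) σ → p σ ξ = ξ)
    (hp3 : ∀ (σ σ' : E →+* ℂ), σ ≠ σ' →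
      ∀ ξ ∈ VsigC E (V := V) σ', p σ ξ = 0) :
    (∀ (u v : V) (σ σ' : E →+* ℂ),
      (σ' = σ.comp ι →
        B (p σ ((1 : ℂ) ⊗ₜ[ℚ] u)) (p σ' ((1 : ℂ) ⊗ₜ[ℚ] v)) = σ (Φ u v)) ∧
      (σ' ≠ σ.comp ι →
        B (p σ ((1 : ℂ) ⊗ₜ[ℚ] u)) (p σ' ((1 : ℂ) ⊗ₜ[ℚ] v)) = 0)) ∧
    (∀ (σ σ' : E →+* ℂ), σ' ≠ σ.comp ι →
      ∀ ξ ∈ VsigC E (V := V) σ, ∀ ζ ∈ VsigC E (V := V) σ', B ξ ζ = 0) := by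
  have hadj := actC_adjoint ι Φ B hΦsmul1 hΦsmul2 hB
  have hsum :=
    Submodule.sum_apply_eq_self_of_iSup_eq_top hInternal.submodule_iSup_eq_top p hp2 hp3
  have horth : ∀ σ σ' : E →+* ℂ, σ' ≠ σ.comp ι →
      ∀ ξ ∈ VsigC E (V := V) σ, ∀ ζ ∈ VsigC E (V := V) σ', B ξ ζ = 0 :=
    fun _ _ h _ hξ _ hζ => apply_eq_zero_of_mem_VsigC ι B hadj h hξ hζ
  refine ⟨fun u v σ σ' => ⟨?_, fun h => horth σ σ' h _ (hp1 σ _) _ (hp1 σ' _)⟩, horth⟩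
  rintro rfl
  exact apply_proj_tmul_proj_comp_tmul ι Φ B hΦsmul1 hB hadj p hp1 hsum u v σ

/-- `E = E₀(θ)` a CM field with CM involution `ι`, `Φ` a nondegenerate
hermitian sesquilinear form on the `E`-vector space `V`, `B` the `ℂ`-bilinear extension
of `tr∘Φ` to `V ⊗_ℚ ℂ`, and `p σ` the projections onto the `V_σ`.  Then
`B (p σ (u⊗1)) (p σ' (v⊗1)) = σ (Φ u v)` if `σ' = σ∘ι`, and `= 0` otherwise; in
particular `B` vanishes identically on `V_σ × V_σ'` whenever `σ' ≠ σ∘ι`. -/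
theorem stmt4 (E₀ E V : Type*) [Field E₀] [NumberField E₀] [Field E] [NumberField E]
    [Algebra E₀ E] [IsScalarTower ℚ E₀ E]
    (htotreal : ∀ (σ : E₀ →+* ℂ) (x : E₀), (σ x).im = 0)
    (s : ℕ) (hs : Module.finrank ℚ E₀ = s)
    (θ : E) (hθ : θ ∉ Set.range (algebraMap E₀ E))
    (θ0 : E₀) (hθ0 : algebraMap E₀ E θ0 = θ ^ 2)
    (hθ0neg : ∀ σ : E₀ →+* ℝ, σ θ0 < 0)
    (hgen : ∀ x : E, ∃ a b : E₀, x = algebraMap E₀ E a + algebraMap E₀ E b * θ)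
    (ι : E →+* E) (hιfix : ∀ a : E₀, ι (algebraMap E₀ E a) = algebraMap E₀ E a)
    (hιθ : ι θ = -θ)
    [AddCommGroup V] [Module E V] [Module ℚ V] [IsScalarTower ℚ E V]
    [FiniteDimensional E V]
    (Φ : V → V → E)
    (hΦadd1 : ∀ x x' y, Φ (x + x') y = Φ x y + Φ x' y)
    (hΦsmul1 : ∀ (e : E) (x y : V), Φ (e • x) y = e * Φ x y)
    (hΦadd2 : ∀ x y y', Φ x (y + y') = Φ x y + Φ x y')
    (hΦsmul2 : ∀ (e : E) (x y : V), Φ x (e • y) = ι e * Φ x y)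
    (hΦherm : ∀ x y, Φ y x = ι (Φ x y))
    (hΦnondeg : ∀ x, (∀ y, Φ x y = 0) → x = 0)
    (B : (ℂ ⊗[ℚ] V) →ₗ[ℂ] (ℂ ⊗[ℚ] V) →ₗ[ℂ] ℂ)
    (hB : ∀ (c c' : ℂ) (u v : V),
      B (c ⊗ₜ[ℚ] u) (c' ⊗ₜ[ℚ] v) = c * c' * ((Algebra.trace ℚ E (Φ u v) : ℚ) : ℂ))
    [DecidableEq (E →+* ℂ)]
    (hInternal : DirectSum.IsInternal (fun σ : E →+* ℂ => VsigC E (V := V) σ))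
    (p : (E →+* ℂ) → (ℂ ⊗[ℚ] V) →ₗ[ℂ] ℂ ⊗[ℚ] V)
    (hp1 : ∀ (σ : E →+* ℂ) (ξ : ℂ ⊗[ℚ] V), p σ ξ ∈ VsigC E (V := V) σ)
    (hp2 : ∀ (σ : E →+* ℂ) (ξ : ℂ ⊗[ℚ] V), ξ ∈ VsigC E (V := V) σ → p σ ξ = ξ)
    (hp3 : ∀ (σ σ' : E →+* ℂ), σ ≠ σ' →
      ∀ ξ ∈ VsigC E (V := V) σ', p σ ξ = 0) :
    (∀ (u v : V) (σ σ' : E →+* ℂ),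
      (σ' = σ.comp ι →
        B (p σ ((1 : ℂ) ⊗ₜ[ℚ] u)) (p σ' ((1 : ℂ) ⊗ₜ[ℚ] v)) = σ (Φ u v)) ∧
      (σ' ≠ σ.comp ι →
        B (p σ ((1 : ℂ) ⊗ₜ[ℚ] u)) (p σ' ((1 : ℂ) ⊗ₜ[ℚ] v)) = 0)) ∧
    (∀ (σ σ' : E →+* ℂ), σ' ≠ σ.comp ι →
      ∀ ξ ∈ VsigC E (V := V) σ, ∀ ζ ∈ VsigC E (V := V) σ', B ξ ζ = 0) :=
  stmt4_general E V ι Φ hΦsmul1 hΦsmul2 B hB hInternal p hp1 hp2 hp3
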